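/- Let j > 0, δ > 0, let u, v ∈ 𝓤_δ, let m ≥ jδ and α ≥ 0, and suppose u ≤ v modulo m and F(0; u) ≤ F(0; v) + α. Then K^{(δ)}u ≤ v modulo max(m − jδ, α). -/

import Mathlib

open MeasureTheory Set Filter

noncomputable section

/-- An element of the space `𝓤`: an atom `u.1 ≥ 0` at the origin together with a
density `u.2` on `ℝ₊`, representing the measure `u.1 δ₀ + u.2 dr`. -/
abbrev UEl := ℝ × (ℝ → ℝ)

/-- Membership in `𝓤`: nonnegative atom, nonnegative density which is in
`L¹(ℝ₊) ∩ L^∞(ℝ₊)`. -/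
def memU (u : UEl) : Prop :=
  0 ≤ u.1 ∧ (∀ r, 0 ≤ u.2 r) ∧
    Integrable u.2 (volume.restrict (Set.Ioi (0:ℝ))) ∧
    ∃ M : ℝ, ∀ r, u.2 r ≤ M

/-- The tail function `F(r; u) = c_u 𝟙_{{0}}(r) + ∫_r^∞ ρ_u`. -/
def tailF (u : UEl) (r : ℝ) : ℝ :=
  (if r = 0 then u.1 else 0) + ∫ x in Set.Ioi r, u.2 x

/-- Total variation distance `|u − v|₁ = |c_u − c_v| + ∫₀^∞ |ρ_u − ρ_v|`. -/
def dist1 (u v : UEl) : ℝ :=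
  |u.1 - v.1| + ∫ r in Set.Ioi (0:ℝ), |u.2 r - v.2 r|

/-- Membership in `𝓤_δ`: in `𝓤` and the density has mass `> jδ`. -/
def memUdelta (j δ : ℝ) (u : UEl) : Prop :=
  memU u ∧ j * δ < ∫ r in Set.Ioi (0:ℝ), u.2 r

/-- `R_δ(u) = inf {r ≥ 0 : F(r; u) = jδ}`. -/
def Rdelta (j δ : ℝ) (u : UEl) : ℝ :=
  sInf {r : ℝ | 0 ≤ r ∧ tailF u r = j * δ}

/-- The cut-and-paste operator `K^{(δ)} u = (jδ, ρ_u 𝟙_{[0, R_δ(u)]})`. -/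
def cutPaste (j δ : ℝ) (u : UEl) : UEl :=
  (j * δ, Set.indicator (Set.Icc 0 (Rdelta j δ u)) u.2)

/-- The Neumann heat kernel on `ℝ₊`. -/
def Gneum (t r r' : ℝ) : ℝ :=
  (Real.sqrt (2 * Real.pi * t))⁻¹ *
    (Real.exp (-(r - r')^2 / (2*t)) + Real.exp (-(r + r')^2 / (2*t)))

/-- The Neumann heat semigroup acting on `𝓤`: the result has zero atom and density
`r ↦ c_u G_t(r,0) + ∫₀^∞ G_t(r,r') ρ_u(r') dr'`. -/
def heat (t : ℝ) (u : UEl) : UEl :=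
  (0, fun r => u.1 * Gneum t r 0 + ∫ r' in Set.Ioi (0:ℝ), Gneum t r r' * u.2 r')

/-- Mass-transport partial order: `u ≤ v` iff `F(r;u) ≤ F(r;v)` for all `r ≥ 0`. -/
def Ule (u v : UEl) : Prop := ∀ r : ℝ, 0 ≤ r → tailF u r ≤ tailF v r

/-- Partial order modulo `m`: `F(r;u) ≤ F(r;v) + m` for all `r ≥ 0`. -/
def UleMod (u v : UEl) (m : ℝ) : Prop :=
  ∀ r : ℝ, 0 ≤ r → tailF u r ≤ tailF v r + m

/-- The lower barrier `S^{(δ,−)}_{kδ}(u)`. -/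
def Sminus (j δ : ℝ) (u : UEl) : ℕ → UEl
  | 0 => u
  | k+1 => cutPaste j δ (heat δ (Sminus j δ u k))

/-- The upper barrier `S^{(δ,+)}_{kδ}(u)`. -/
def Splus (j δ : ℝ) (u : UEl) : ℕ → UEl
  | 0 => u
  | k+1 => heat δ (cutPaste j δ (Splus j δ u k))

/-- A nonnegative density in `L¹(ℝ₊) ∩ L^∞(ℝ₊)`. -/
def goodFn (u : ℝ → ℝ) : Prop :=
  (∀ r, 0 ≤ u r) ∧ Integrable u (volume.restrict (Set.Ioi (0:ℝ))) ∧
    ∃ M : ℝ, ∀ r, u r ≤ M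

/-- Mass-transport order on densities: `∫_r^∞ u ≤ ∫_r^∞ v` for all `r ≥ 0`. -/
def fnLe (u v : ℝ → ℝ) : Prop :=
  ∀ r : ℝ, 0 ≤ r → (∫ x in Set.Ioi r, u x) ≤ ∫ x in Set.Ioi r, v x

end

/-! The tail `G r = ∫_r^∞ ρ_u` is continuous on `[0, ∞)`, tends to `0` and starts above
`jδ`, so the set defining `R_δ(u)` is closed and nonempty and `G(R_δ(u)) = jδ`. Hence on
`(0, ∞)` the tail of `K^{(δ)}u` is `(G - jδ)⁺ ≤ (F(·;v) + m - jδ)⁺`, while at `0` the pasted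
atom restores the mass `G(0) ≤ F(0;u)`. -/

theorem exists_integral_Ioi_eq {f : ℝ → ℝ} {a c : ℝ} (hf : IntegrableOn f (Ioi a))
    (hc : c ∈ Ioc 0 (∫ x in Ioi a, f x)) : ∃ r ∈ Ici a, ∫ x in Ioi r, f x = c :=
  isPreconnected_Ici.intermediate_value_Ioc self_mem_Ici (le_principal_iff.mpr (Ici_mem_atTop a))
    hf.continuousOn_Ici_primitive_Ioi (tendsto_integral_Ioi_zero tendsto_id) hc

section TailFunction

variable {u : UEl}

theorem tailF_of_ne_zero {r : ℝ} (hr : r ≠ 0) : tailF u r = ∫ x in Ioi r, u.2 x := by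
  simp [tailF, hr]

theorem tailF_zero : tailF u 0 = u.1 + ∫ x in Ioi 0, u.2 x := by
  simp [tailF]

theorem tailF_nonneg (hu : memU u) (r : ℝ) : 0 ≤ tailF u r := by
  have hatom : 0 ≤ if r = 0 then u.1 else 0 := by split_ifs <;> simp [hu.1]
  exact add_nonneg hatom (integral_nonneg hu.2.1)

end TailFunction

section CutPaste

variable {j δ : ℝ} {u : UEl}

theorem Rdelta_spec (hjδ : 0 < j * δ) (hu : memUdelta j δ u) :
    0 ≤ Rdelta j δ u ∧ ∫ x in Ioi (Rdelta j δ u), u.2 x = j * δ := by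
  obtain ⟨⟨hc, -, hint, -⟩, hmass⟩ := hu
  replace hint : IntegrableOn u.2 (Ioi 0) := hint
  set G : ℝ → ℝ := fun r ↦ ∫ x in Ioi r, u.2 x
  have hS : {r | 0 ≤ r ∧ tailF u r = j * δ} = Ici 0 ∩ G ⁻¹' {j * δ} := by
    ext r
    rcases eq_or_ne r 0 with rfl | hr
    · -- the atom keeps `0` out of both sets: `F(0;u) ≥ G 0 > jδ`
      simp only [mem_ofPred_eq, tailF_zero, mem_inter_iff, mem_Ici, mem_preimage,
        mem_singleton_iff, G]
      constructor <;> intro h <;> linarith [h.2]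
    · simp [tailF_of_ne_zero hr, G]
  have hclosed : IsClosed (Ici 0 ∩ G ⁻¹' {j * δ}) :=
    hint.continuousOn_Ici_primitive_Ioi.preimage_isClosed_of_isClosed isClosed_Ici
      isClosed_singleton
  obtain ⟨r₀, hr₀, hGr₀⟩ := exists_integral_Ioi_eq hint ⟨hjδ, hmass.le⟩
  have := hclosed.csInf_mem ⟨r₀, hr₀, hGr₀⟩ ⟨0, fun _ hr ↦ hr.1⟩
  rwa [Rdelta, hS]

theorem integral_Ioi_cutPaste_of_le (hjδ : 0 < j * δ) (hu : memUdelta j δ u) {r : ℝ}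
    (hr : 0 ≤ r) (hrR : r ≤ Rdelta j δ u) :
    ∫ x in Ioi r, (cutPaste j δ u).2 x = (∫ x in Ioi r, u.2 x) - j * δ := by
  have hset : Ioi r ∩ Icc 0 (Rdelta j δ u) = Ioc r (Rdelta j δ u) := by
    ext x
    simp only [mem_inter_iff, mem_Ioi, mem_Icc, mem_Ioc]
    constructor
    · exact fun h ↦ ⟨h.1, h.2.2⟩
    · exact fun h ↦ ⟨h.1, hr.trans h.1.le, h.2⟩
  have hint : IntegrableOn u.2 (Ioi r) := IntegrableOn.mono_set hu.1.2.2.1 (Ioi_subset_Ioi hr)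
  rw [cutPaste, setIntegral_indicator measurableSet_Icc, hset,
    ← intervalIntegral.integral_of_le hrR, ← intervalIntegral.integral_Ioi_sub_Ioi hint hrR,
    (Rdelta_spec hjδ hu).2]

theorem integral_Ioi_cutPaste_of_lt {r : ℝ} (hRr : Rdelta j δ u < r) :
    ∫ x in Ioi r, (cutPaste j δ u).2 x = 0 :=
  setIntegral_eq_zero_of_forall_eq_zero fun _ hx ↦
    indicator_of_notMem (fun h ↦ (hRr.trans hx).not_ge h.2) _

end CutPaste

theorem cutPaste_le_mod_general (j δ : ℝ) (hj : 0 < j) (hδ : 0 < δ)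
    (u v : UEl) (hu : memUdelta j δ u) (hv : memUdelta j δ v)
    (m α : ℝ) (hm : j * δ ≤ m)
    (hle : UleMod u v m) (hmass : tailF u 0 ≤ tailF v 0 + α) :
    UleMod (cutPaste j δ u) v (max (m - j * δ) α) := by
  have hjδ : 0 < j * δ := mul_pos hj hδ
  have hmax := le_max_left (m - j * δ) α
  intro r hr
  rcases hr.eq_or_lt with rfl | hr
  · have hK : tailF (cutPaste j δ u) 0 = ∫ x in Ioi 0, u.2 x := by
      rw [tailF_zero, integral_Ioi_cutPaste_of_le hjδ hu le_rfl (Rdelta_spec hjδ hu).1]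
      simp [cutPaste]
    rw [tailF_zero] at hmass
    linarith [hu.1.1, le_max_right (m - j * δ) α]
  · rw [tailF_of_ne_zero hr.ne']
    rcases le_or_gt r (Rdelta j δ u) with hrR | hRr
    · have := hle r hr.le
      rw [tailF_of_ne_zero hr.ne'] at this
      rw [integral_Ioi_cutPaste_of_le hjδ hu hr.le hrR]
      linarith
    · rw [integral_Ioi_cutPaste_of_lt hRr]
      linarith [tailF_nonneg hv.1 r]

/-- if `u ≤ v` modulo `m ≥ jδ` and `F(0;u) ≤ F(0;v) + α`, then
`K^{(δ)}u ≤ v` modulo `max(m − jδ, α)`. -/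
theorem cutPaste_le_mod (j δ : ℝ) (hj : 0 < j) (hδ : 0 < δ)
    (u v : UEl) (hu : memUdelta j δ u) (hv : memUdelta j δ v)
    (m α : ℝ) (hm : j * δ ≤ m) (hα : 0 ≤ α)
    (hle : UleMod u v m) (hmass : tailF u 0 ≤ tailF v 0 + α) :
    UleMod (cutPaste j δ u) v (max (m - j * δ) α) :=
  cutPaste_le_mod_general j δ hj hδ u v hu hv m α hm hle hmass
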